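/- Let m, n ≥ 0 and define T^h(m,n) as the number of Dyck paths p of semilength m+n such that S_j(p) > n+1 for some j, where S_j(p) is the number of up-steps minus right-steps among the first j steps. Then T^h(m,n) = Σ_{i=0}^∞ [C(2m+2n, m - i(n+3) - 2) - 2·C(2m+2n, m - i(n+3) - 3) + C(2m+2n, m - i(n+3) - 4)], where binomial coefficients with negative lower index are 0. -/

import Mathlib

/-- Binomial coefficient `C(n, k)` with integer lower index, taken to be `0`
when the lower index is negative or exceeds the upper index. -/
def chooseZ (n : ℕ) (k : ℤ) : ℤ :=
  if 0 ≤ k ∧ k ≤ (n : ℤ) then (n.choose k.toNat : ℤ) else 0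

/-- The number of up-steps among the first `j` steps of the lattice path `p`
(`true` = up-step `(0,1)`, `false` = right-step `(1,0)`); after `j` steps the
path is at the point `(j - ups p j, ups p j)`. -/
def ups {len : ℕ} (p : Fin len → Bool) (j : ℕ) : ℕ :=
  (Finset.univ.filter (fun i : Fin len => (i : ℕ) < j ∧ p i = true)).card

/-!
Write `stripPaths h L u` for the lattice paths of length `L` with `u` up-steps whose height
`2 * ups p j - j` stays in `[0, h]`. Their number and the reflection sum
`∑ₖ [C(L, u + k(h+2)) - C(L, L - u - 1 + k(h+2))]` both satisfy Pascal's recurrence inside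
the strip, both vanish on the boundary lines `L = 2u + 1` and `2u = L + h + 1` (where the two
families of binomials cancel, directly resp. after the shift `k ↦ k - 1`), and both equal
`[u = 0]` at `L = 0`. For `h ≥ L` only the term `k = 0` survives, which counts all Dyck paths;
so the paths leaving the strip of width `n + 1` are counted by minus the terms with `k ≠ 0`, and
pairing `k = i + 1` with `k = -(i + 1)` through `C(L, a) = C(L, L - a)` gives the stated summands.
-/

open Finset

section chooseZ

lemma chooseZ_of_neg {n : ℕ} {k : ℤ} (hk : k < 0) : chooseZ n k = 0 :=
  if_neg fun h => by omega

lemma chooseZ_of_lt {n : ℕ} {k : ℤ} (hk : n < k) : chooseZ n k = 0 :=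
  if_neg fun h => by omega

@[simp]
lemma chooseZ_natCast (n k : ℕ) : chooseZ n k = n.choose k := by
  unfold chooseZ
  split_ifs with h
  · simp
  · rw [Nat.choose_eq_zero_of_lt (by omega), Nat.cast_zero]

lemma chooseZ_succ (n : ℕ) (k : ℤ) :
    chooseZ (n + 1) k = chooseZ n k + chooseZ n (k - 1) := by
  obtain hk | ⟨a, rfl⟩ := lt_or_ge k 0 |>.imp_right Int.eq_ofNat_of_zero_le
  · rw [chooseZ_of_neg hk, chooseZ_of_neg hk, chooseZ_of_neg (by omega), add_zero]
  · cases a with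
    | zero =>
      rw [chooseZ_of_neg (show ((0 : ℕ) : ℤ) - 1 < 0 by omega), add_zero, chooseZ_natCast,
        chooseZ_natCast, Nat.choose_zero_right, Nat.choose_zero_right]
    | succ a =>
      rw [show ((a + 1 : ℕ) : ℤ) - 1 = a by omega, chooseZ_natCast,
        chooseZ_natCast, chooseZ_natCast, Nat.choose_succ_succ', Nat.cast_add, add_comm]

lemma chooseZ_symm (n : ℕ) (k : ℤ) : chooseZ n k = chooseZ n (n - k) := by
  rcases lt_or_ge k 0 with hk | hk
  · rw [chooseZ_of_neg hk, chooseZ_of_lt (by omega)]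
  rcases lt_or_ge (n : ℤ) k with hnk | hnk
  · rw [chooseZ_of_lt hnk, chooseZ_of_neg (by omega)]
  obtain ⟨a, rfl⟩ := Int.eq_ofNat_of_zero_le hk
  rw [show (n : ℤ) - a = (n - a : ℕ) by omega, chooseZ_natCast, chooseZ_natCast,
    Nat.choose_symm (by omega)]

lemma chooseZ_add_mul_eq_zero {n : ℕ} {a d k : ℤ} (hk : k ≠ 0) (ha : a < d)
    (hna : n - a < d) : chooseZ n (a + k * d) = 0 := by
  rcases lt_or_gt_of_ne hk with hk | hk
  · exact chooseZ_of_neg (by nlinarith)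
  · exact chooseZ_of_lt (by nlinarith)

lemma summable_chooseZ_add_mul (n : ℕ) (a : ℤ) {d : ℤ} (hd : 0 < d) :
    Summable fun k : ℤ => chooseZ n (a + k * d) := by
  refine summable_of_ne_finset_zero (s := Icc (-(|a| + n)) (|a| + n)) fun k hk => ?_
  rw [mem_Icc, not_and_or, not_le, not_le] at hk
  have := abs_nonneg a
  have hd' : 0 ≤ d - 1 := by omega
  rcases hk with hk | hk
  · exact chooseZ_of_neg (by nlinarith [le_abs_self a, mul_nonneg (by omega : 0 ≤ -k) hd'])
  · exact chooseZ_of_lt (by nlinarith [neg_abs_le a, mul_nonneg (by omega : 0 ≤ k) hd'])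

lemma tsum_chooseZ_add_mul {n : ℕ} {a d : ℤ} (ha : a < d) (hna : n - a < d) :
    ∑' k : ℤ, chooseZ n (a + k * d) = chooseZ n a := by
  rw [tsum_eq_single 0 fun k hk => chooseZ_add_mul_eq_zero hk ha hna, zero_mul, add_zero]

end chooseZ

section ups

variable {L : ℕ}

lemma ups_of_le (p : Fin L → Bool) {j : ℕ} (hj : L ≤ j) : ups p j = ups p L := by
  unfold ups
  congr 1
  exact filter_congr fun i _ => by
    simp only [show (i : ℕ) < j ∧ (i : ℕ) < L from ⟨by omega, i.2⟩]

lemma ups_le (p : Fin L → Bool) (j : ℕ) : ups p j ≤ j :=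
  calc ups p j ≤ #(range j) :=
        card_le_card_of_injOn Fin.val (fun i hi => by simp_all) Fin.val_injective.injOn
    _ = j := card_range j

lemma ups_snoc (q : Fin L → Bool) (b : Bool) (j : ℕ) :
    ups (Fin.snoc q b : Fin (L + 1) → Bool) j = ups q j + if L < j ∧ b then 1 else 0 := by
  simp only [ups, card_filter, Fin.sum_univ_castSucc, Fin.snoc_castSucc, Fin.snoc_last,
    Fin.val_castSucc, Fin.val_last]

lemma ups_snoc_of_le (q : Fin L → Bool) (b : Bool) {j : ℕ} (hj : j ≤ L) :
    ups (Fin.snoc q b : Fin (L + 1) → Bool) j = ups q j := by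
  rw [ups_snoc, if_neg (by omega), add_zero]

lemma ups_snoc_succ (q : Fin L → Bool) (b : Bool) :
    ups (Fin.snoc q b : Fin (L + 1) → Bool) (L + 1) = ups q L + b.toNat := by
  rw [ups_snoc, ups_of_le q (Nat.le_succ L)]
  cases b <;> simp

end ups

def dyckPaths (L u : ℕ) : Finset (Fin L → Bool) :=
  {p | ups p L = u ∧ ∀ j ≤ L, j ≤ 2 * ups p j}

def stripPaths (h L u : ℕ) : Finset (Fin L → Bool) :=
  {p | ups p L = u ∧ ∀ j ≤ L, j ≤ 2 * ups p j ∧ 2 * ups p j ≤ j + h}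

section strip

variable {h L u : ℕ}

lemma mem_stripPaths {p : Fin L → Bool} : p ∈ stripPaths h L u ↔
    ups p L = u ∧ ∀ j ≤ L, j ≤ 2 * ups p j ∧ 2 * ups p j ≤ j + h := by
  simp [stripPaths]

lemma stripPaths_subset_dyckPaths : stripPaths h L u ⊆ dyckPaths L u := by
  intro p
  simp only [stripPaths, dyckPaths, mem_filter, mem_univ, true_and]
  exact fun hp => ⟨hp.1, fun j hj => (hp.2 j hj).1⟩

lemma dyckPaths_eq_stripPaths (hh : L ≤ h) : dyckPaths L u = stripPaths h L u :=
  filter_congr fun p _ => and_congr_right fun _ => forall₂_congr fun j hj =>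
    iff_self_and.2 fun _ => by have := ups_le p j; omega

lemma dyckPaths_sdiff_stripPaths : dyckPaths L u \ stripPaths h L u =
    ({p | ups p L = u ∧ (∀ j ≤ L, j ≤ 2 * ups p j) ∧ ∃ j ≤ L, j + h < 2 * ups p j} :
      Finset (Fin L → Bool)) := by
  ext p
  simp only [dyckPaths, stripPaths, mem_sdiff, mem_filter, mem_univ, true_and]
  constructor
  · rintro ⟨⟨hend, hdyck⟩, hstrip⟩
    refine ⟨hend, hdyck, ?_⟩
    by_contra! hle
    exact hstrip ⟨hend, fun j hj => ⟨hdyck j hj, hle j hj⟩⟩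
  · rintro ⟨hend, hdyck, j, hj, hgt⟩
    exact ⟨⟨hend, hdyck⟩, fun hstrip => absurd (hstrip.2 j hj).2 (by omega)⟩

lemma stripPaths_eq_empty_of_lt (hu : 2 * u < L) : stripPaths h L u = ∅ :=
  eq_empty_of_forall_notMem fun p hp => by
    have := ((mem_stripPaths.1 hp).2 L le_rfl).1
    rw [(mem_stripPaths.1 hp).1] at this
    omega

lemma stripPaths_eq_empty_of_gt (hu : L + h < 2 * u) : stripPaths h L u = ∅ :=
  eq_empty_of_forall_notMem fun p hp => by
    have := ((mem_stripPaths.1 hp).2 L le_rfl).2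
    rw [(mem_stripPaths.1 hp).1] at this
    omega

lemma card_stripPaths_zero : #(stripPaths h 0 u) = if u = 0 then 1 else 0 := by
  have hups (p : Fin 0 → Bool) (j : ℕ) : ups p j = 0 := by simp [ups]
  split_ifs with hu
  · subst hu
    rw [show stripPaths h 0 0 = univ from eq_univ_of_forall fun p =>
      mem_stripPaths.2 ⟨hups p 0, fun j hj => by simp [hups, Nat.le_zero.1 hj]⟩]
    simp
  · rw [eq_empty_of_forall_notMem fun p hp => hu ((mem_stripPaths.1 hp).1.symm.trans (hups p 0))]
    rfl

lemma snoc_mem_stripPaths_iff {q : Fin L → Bool} {b : Bool} (hu₁ : L + 1 ≤ 2 * u)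
    (hu₂ : 2 * u ≤ L + 1 + h) :
    (Fin.snoc q b : Fin (L + 1) → Bool) ∈ stripPaths h (L + 1) u ↔
      q ∈ stripPaths h L (u - b.toNat) := by
  have hb := Bool.toNat_le b
  simp only [mem_stripPaths, ups_snoc_succ]
  constructor
  · rintro ⟨hend, hstrip⟩
    exact ⟨by omega, fun j hj => ups_snoc_of_le q b hj ▸ hstrip j (by omega)⟩
  · rintro ⟨hend, hstrip⟩
    refine ⟨by omega, fun j hj => ?_⟩
    rcases Nat.lt_or_ge j (L + 1) with hj' | hj'
    · rw [ups_snoc_of_le q b (by omega)]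
      exact hstrip j (by omega)
    · obtain rfl : j = L + 1 := by omega
      rw [ups_snoc_succ]
      omega

lemma card_stripPaths_succ (hu₁ : L + 1 ≤ 2 * u) (hu₂ : 2 * u ≤ L + 1 + h) :
    #(stripPaths h (L + 1) u) = #(stripPaths h L (u - 1)) + #(stripPaths h L u) := by
  have hcount (b : Bool) : ∑ q : Fin L → Bool,
      (if (Fin.snoc q b : Fin (L + 1) → Bool) ∈ stripPaths h (L + 1) u then 1 else 0) =
        #(stripPaths h L (u - b.toNat)) := by
    simp_rw [snoc_mem_stripPaths_iff hu₁ hu₂, sum_boole, Nat.cast_id, filter_mem_eq_inter,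
      univ_inter]
  calc #(stripPaths h (L + 1) u)
      = ∑ p : Fin (L + 1) → Bool, if p ∈ stripPaths h (L + 1) u then 1 else 0 := by
        rw [sum_boole, Nat.cast_id, filter_mem_eq_inter, univ_inter]
    _ = ∑ x : Bool × (Fin L → Bool),
          if (Fin.snoc x.2 x.1 : Fin (L + 1) → Bool) ∈ stripPaths h (L + 1) u then 1 else 0 :=
        ((Fin.snocEquiv fun _ => Bool).sum_comp _).symm
    _ = #(stripPaths h L (u - 1)) + #(stripPaths h L u) := by
        rw [Fintype.sum_prod_type, Fintype.sum_bool, hcount, hcount]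
        rfl

end strip

section reflection

variable (h L : ℕ) (u : ℤ)

def reflectionTerm (k : ℤ) : ℤ :=
  chooseZ L (u + k * (h + 2)) - chooseZ L (L - u - 1 + k * (h + 2))

noncomputable def reflectionSum : ℤ :=
  ∑' k : ℤ, reflectionTerm h L u k

lemma summable_reflectionTerm : Summable (reflectionTerm h L u) :=
  (summable_chooseZ_add_mul L _ (by omega)).sub (summable_chooseZ_add_mul L _ (by omega))

lemma reflectionSum_eq_tsum_sub_tsum : reflectionSum h L u =
    ∑' k : ℤ, chooseZ L (u + k * (h + 2)) - ∑' k : ℤ, chooseZ L (L - u - 1 + k * (h + 2)) :=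
  (summable_chooseZ_add_mul L u (by omega)).tsum_sub (summable_chooseZ_add_mul L _ (by omega))

lemma reflectionTerm_zero :
    reflectionTerm h L u 0 = chooseZ L u - chooseZ L (L - u - 1) := by
  simp [reflectionTerm]

lemma reflectionTerm_succ (k : ℤ) :
    reflectionTerm h (L + 1) u k = reflectionTerm h L u k + reflectionTerm h L (u - 1) k := by
  simp only [reflectionTerm, chooseZ_succ, Nat.cast_succ]
  ring_nf

lemma reflectionSum_succ :
    reflectionSum h (L + 1) u = reflectionSum h L u + reflectionSum h L (u - 1) := by
  simp only [reflectionSum, reflectionTerm_succ]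
  exact (summable_reflectionTerm h L u).tsum_add (summable_reflectionTerm h L (u - 1))

variable {h L u}

lemma reflectionSum_eq_zero_of_eq_two_mul_add_one (hu : L = 2 * u + 1) :
    reflectionSum h L u = 0 := by
  simp [reflectionSum, reflectionTerm, show (L : ℤ) - u - 1 = u by omega]

lemma reflectionSum_eq_zero_of_two_mul_eq (hu : 2 * u = L + h + 1) :
    reflectionSum h L u = 0 := by
  have hshift (k : ℤ) :
      chooseZ L (L - u - 1 + k * (h + 2)) = chooseZ L (u + (k - 1) * (h + 2)) := by
    congr 1
    linear_combination -hu
  rw [reflectionSum_eq_tsum_sub_tsum, tsum_congr hshift, sub_eq_zero]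
  exact ((Equiv.subRight (1 : ℤ)).tsum_eq fun k => chooseZ L (u + k * (h + 2))).symm

lemma reflectionSum_eq_of_lt (hu₁ : u + 1 < h + 2) (hu₂ : L - u < h + 2) :
    reflectionSum h L u = chooseZ L u - chooseZ L (L - u - 1) := by
  rw [reflectionSum_eq_tsum_sub_tsum, tsum_chooseZ_add_mul (by omega) (by omega),
    tsum_chooseZ_add_mul (by omega) (by omega)]

end reflection

lemma card_stripPaths (h L u : ℕ) (hu₁ : L ≤ 2 * u + 1) (hu₂ : 2 * u ≤ L + h + 1) :
    (#(stripPaths h L u) : ℤ) = reflectionSum h L u := by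
  induction L generalizing u with
  | zero =>
    rw [card_stripPaths_zero, reflectionSum_eq_of_lt (by omega) (by omega), chooseZ_natCast,
      chooseZ_of_neg (by omega), sub_zero]
    cases u <;> simp
  | succ L ih =>
    rcases Nat.lt_or_ge (2 * u) (L + 1) with hlow | hlow
    · rw [stripPaths_eq_empty_of_lt hlow,
        reflectionSum_eq_zero_of_eq_two_mul_add_one (by push_cast; omega), card_empty,
        Nat.cast_zero]
    rcases Nat.lt_or_ge (L + 1 + h) (2 * u) with hhigh | hhigh
    · rw [stripPaths_eq_empty_of_gt hhigh,
        reflectionSum_eq_zero_of_two_mul_eq (by push_cast; omega), card_empty, Nat.cast_zero]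
    rw [card_stripPaths_succ hlow hhigh, reflectionSum_succ, Nat.cast_add,
      ih u (by omega) (by omega), ih (u - 1) (by omega) (by omega), Nat.cast_pred (by omega),
      add_comm]

lemma tsum_int_eq_zero_add_tsum_nat {G : Type*} [AddCommGroup G] [UniformSpace G]
    [IsUniformAddGroup G] [CompleteSpace G] [T2Space G] {f : ℤ → G} (hf : Summable f) :
    ∑' k, f k = f 0 + ∑' i : ℕ, (f (i + 1) + f (-(i + 1))) := by
  have h₁ : Summable fun i : ℕ => f (i + 1) :=
    hf.comp_injective fun a b hab => by simpa using hab
  have h₂ : Summable fun i : ℕ => f (-(i + 1)) :=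
    hf.comp_injective fun a b hab => by simpa using hab
  rw [tsum_of_add_one_of_neg_add_one h₁ h₂, h₁.tsum_add h₂]
  abel

lemma reflectionTerm_add_one_add_neg (m n i : ℕ) :
    reflectionTerm (n + 1) (2 * (m + n)) (m + n : ℕ) (i + 1)
      + reflectionTerm (n + 1) (2 * (m + n)) (m + n : ℕ) (-(i + 1))
      = -(chooseZ (2 * (m + n)) ((m : ℤ) - i * (n + 3) - 2)
          - 2 * chooseZ (2 * (m + n)) ((m : ℤ) - i * (n + 3) - 3)
          + chooseZ (2 * (m + n)) ((m : ℤ) - i * (n + 3) - 4)) := by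
  unfold reflectionTerm
  rw [chooseZ_symm _ (_ + (_ + 1) * _), chooseZ_symm _ (_ - 1 + (_ + 1) * _)]
  push_cast
  ring_nf

/-- Let `m, n ≥ 0`. The number `T^h(m,n)` of Dyck paths `p` of semilength `m+n`
such that the height `S_j = (#ups) - (#rights)` exceeds `n+1` for some `j`
equals `Σ_{i=0}^∞ [C(2m+2n, m - i(n+3) - 2) - 2 C(2m+2n, m - i(n+3) - 3)
+ C(2m+2n, m - i(n+3) - 4)]` (binomial coefficients with negative lower index
being `0`). -/
theorem count_excluded_dyck_paths (m n : ℕ) :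
    (((Finset.univ : Finset (Fin (2 * (m + n)) → Bool)).filter (fun p =>
        ups p (2 * (m + n)) = m + n ∧
        (∀ j ≤ 2 * (m + n), j ≤ 2 * ups p j) ∧
        ∃ j ≤ 2 * (m + n), j + (n + 1) < 2 * ups p j)).card : ℤ)
      = ∑' i : ℕ, (chooseZ (2 * m + 2 * n) ((m : ℤ) - i * (n + 3) - 2)
          - 2 * chooseZ (2 * m + 2 * n) ((m : ℤ) - i * (n + 3) - 3)
          + chooseZ (2 * m + 2 * n) ((m : ℤ) - i * (n + 3) - 4)) := by
  rw [← dyckPaths_sdiff_stripPaths, card_sdiff_of_subset stripPaths_subset_dyckPaths,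
    Nat.cast_sub (card_le_card stripPaths_subset_dyckPaths), dyckPaths_eq_stripPaths le_rfl,
    card_stripPaths _ _ _ (by omega) (by omega), card_stripPaths _ _ _ (by omega) (by omega),
    reflectionSum_eq_of_lt (by omega) (by omega), ← reflectionTerm_zero (n + 1), reflectionSum,
    tsum_int_eq_zero_add_tsum_nat (summable_reflectionTerm _ _ _), sub_add_cancel_left,
    ← tsum_neg, show 2 * m + 2 * n = 2 * (m + n) by ring]
  exact tsum_congr fun i => by rw [reflectionTerm_add_one_add_neg, neg_neg]
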